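/- Let M be a reduced atomic additive submonoid of ℤ^d and let C = cone_ℚ(M) be the conic hull of M in ℚ^d. Then an element a ∈ M \ {0} is a strong atom of M if and only if ℚ_{≥0}·a is a one-dimensional face of C and M ∩ ℚ_{≥0}·a = ℕ₀·a. -/

import Mathlib

/-- An element `x` is a unit in the additive submonoid `M` if both `x` and `-x` lie in `M`. -/
def AddIsUnitIn {G : Type*} [AddCommGroup G] (M : AddSubmonoid G) (x : G) : Prop :=
  x ∈ M ∧ -x ∈ M

/-- `a` is an atom of `M`: a non-unit element of `M` that is not a sum of two non-units of `M`. -/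
def AddIsAtomIn {G : Type*} [AddCommGroup G] (M : AddSubmonoid G) (a : G) : Prop :=
  a ∈ M ∧ ¬ AddIsUnitIn M a ∧
    ∀ b c : G, b ∈ M → c ∈ M → a = b + c → AddIsUnitIn M b ∨ AddIsUnitIn M c

/-- `M` is atomic: every non-unit element of `M` is a finite sum of atoms of `M`. -/
def AddIsAtomicIn {G : Type*} [AddCommGroup G] (M : AddSubmonoid G) : Prop :=
  ∀ x ∈ M, ¬ AddIsUnitIn M x →
    ∃ s : Multiset G, (∀ a ∈ s, AddIsAtomIn M a) ∧ s.sum = x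

/-- `a` is a strong atom of `M`: an atom all of whose multiples `n • a` factor uniquely
into atoms of `M` (namely as `n` copies of `a`). -/
def AddIsStrongAtomIn {G : Type*} [AddCommGroup G] (M : AddSubmonoid G) (a : G) : Prop :=
  AddIsAtomIn M a ∧ ∀ n : ℕ, 0 < n → ∀ s : Multiset G,
    (∀ b ∈ s, AddIsAtomIn M b) → s.sum = n • a → s = Multiset.replicate n a

/-- `p` is a prime element of `M`: a non-unit of `M` such that whenever `p` divides
`b + c` in `M`, it divides `b` or `c` in `M`. -/
def AddIsPrimeIn {G : Type*} [AddCommGroup G] (M : AddSubmonoid G) (p : G) : Prop :=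
  p ∈ M ∧ ¬ AddIsUnitIn M p ∧
    ∀ b c : G, b ∈ M → c ∈ M → (∃ d ∈ M, b + c = p + d) →
      (∃ d ∈ M, b = p + d) ∨ (∃ d ∈ M, c = p + d)

/-- Componentwise coercion of an integer vector to a rational vector. -/
def coeZQ {d : ℕ} (v : Fin d → ℤ) : Fin d → ℚ := fun i => (v i : ℚ)

/-- The conic hull of a set `S ⊆ ℚ^d`: all finite nonnegative rational combinations
of elements of `S`. -/
def conicHullQ {d : ℕ} (S : Set (Fin d → ℚ)) : Set (Fin d → ℚ) :=
  {y | ∃ (n : ℕ) (c : Fin n → ℚ) (v : Fin n → Fin d → ℚ),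
    (∀ i, 0 ≤ c i ∧ v i ∈ S) ∧ y = ∑ i, c i • v i}

/-- A (convex) cone in `ℚ^d`: a nonempty set closed under nonnegative combinations. -/
def IsConvexConeQ {d : ℕ} (C : Set (Fin d → ℚ)) : Prop :=
  C.Nonempty ∧ ∀ x ∈ C, ∀ y ∈ C, ∀ a b : ℚ, 0 ≤ a → 0 ≤ b → a • x + b • y ∈ C

/-- `F` is a face of the cone `C`: a subcone such that whenever an open segment between
two points of `C` meets `F`, both endpoints lie in `F`. -/
def IsFaceOfQ {d : ℕ} (C F : Set (Fin d → ℚ)) : Prop :=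
  F ⊆ C ∧ IsConvexConeQ F ∧
    ∀ x ∈ C, ∀ y ∈ C, (∃ t : ℚ, 0 < t ∧ t < 1 ∧ t • x + (1 - t) • y ∈ F) → x ∈ F ∧ y ∈ F

/-!
The strong atoms are exactly the `a` whose multiples `ℕ₀·a` form a divisor-closed submonoid
of `M`: if `b + c = n·a`, factorizations of `b` and `c` concatenate to the unique factorization
of `n·a`, so `b` is a multiple of `a`; conversely, every atom in a factorization of `n·a` is
then some `j·a = a + (j - 1)·a`, which is an atom only for `j = 1`.
Divisor-closedness of `ℕ₀·a` is the integral form of the two geometric conditions: every point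
of `cone_ℚ(M)` has a positive integer multiple in `M`, so clearing denominators turns
`x + y ∈ ℚ≥0·a` for points of the cone into `b + c ∈ ℕ₀·a` for elements of `M`.
-/

section Factorization

variable {G : Type*} [AddCommGroup G] {M : AddSubmonoid G} {a : G}

def IsDivisorClosedIn (M : AddSubmonoid G) (S : Set G) : Prop :=
  ∀ b ∈ M, ∀ c ∈ M, b + c ∈ S → b ∈ S

theorem addIsUnitIn_iff_eq_zero (hred : ∀ x ∈ M, -x ∈ M → x = 0) {x : G} :
    AddIsUnitIn M x ↔ x = 0 :=
  ⟨fun h => hred x h.1 h.2, by rintro rfl; exact ⟨M.zero_mem, by simp⟩⟩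

theorem exists_atoms_sum_eq (hred : ∀ x ∈ M, -x ∈ M → x = 0) (hatomic : AddIsAtomicIn M)
    {x : G} (hx : x ∈ M) : ∃ s : Multiset G, (∀ b ∈ s, AddIsAtomIn M b) ∧ s.sum = x := by
  by_cases h0 : x = 0
  · exact ⟨0, by simp, by simp [h0]⟩
  · exact hatomic x hx ((addIsUnitIn_iff_eq_zero hred).not.mpr h0)

theorem AddIsStrongAtomIn.isDivisorClosedIn_multiples (hred : ∀ x ∈ M, -x ∈ M → x = 0)
    (hatomic : AddIsAtomicIn M) (ha : AddIsStrongAtomIn M a) :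
    IsDivisorClosedIn M (AddSubmonoid.multiples a) := by
  intro b hb c hc hbc
  obtain ⟨n, hn⟩ := (AddSubmonoid.mem_multiples_iff _ _).mp hbc
  rw [SetLike.mem_coe, AddSubmonoid.mem_multiples_iff]
  obtain ⟨s, hs, rfl⟩ := exists_atoms_sum_eq hred hatomic hb
  obtain ⟨t, ht, rfl⟩ := exists_atoms_sum_eq hred hatomic hc
  rcases Nat.eq_zero_or_pos n with rfl | hn0
  · rw [zero_nsmul, eq_comm] at hn
    exact ⟨0, by rw [zero_nsmul, hred _ hb (neg_eq_of_add_eq_zero_right hn ▸ hc)]⟩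
  · have hst := ha.2 n hn0 (s + t) (by simpa [or_imp, forall_and] using ⟨hs, ht⟩) (by simp [hn])
    have hs_rep : s = Multiset.replicate (Multiset.card s) a :=
      Multiset.eq_replicate_card.mpr fun x hx =>
        Multiset.eq_of_mem_replicate (hst ▸ Multiset.mem_add.mpr (Or.inl hx))
    exact ⟨Multiset.card s, by rw [← Multiset.sum_replicate, ← hs_rep]⟩

variable [IsAddTorsionFree G]

theorem nsmul_left_injective_of_ne_zero (ha : a ≠ 0) :
    Function.Injective (· • a : ℕ → G) := fun n m h => by
  exact_mod_cast smul_left_injective ℤ ha (a₁ := (n : ℤ)) (a₂ := m) (by simpa using h)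

theorem eq_one_of_addIsAtomIn_nsmul (hred : ∀ x ∈ M, -x ∈ M → x = 0) (ha : a ∈ M)
    (ha0 : a ≠ 0) {j : ℕ} (h : AddIsAtomIn M (j • a)) : j = 1 := by
  obtain _ | _ | j := j
  · exact absurd ((addIsUnitIn_iff_eq_zero hred).mpr (zero_nsmul a)) h.2.1
  · rfl
  · have := h.2.2 a ((j + 1) • a) ha (M.nsmul_mem ha _) (succ_nsmul' a (j + 1))
    simp [addIsUnitIn_iff_eq_zero hred, ha0] at this

theorem IsDivisorClosedIn.addIsAtomIn (hred : ∀ x ∈ M, -x ∈ M → x = 0) (ha : a ∈ M)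
    (ha0 : a ≠ 0) (h : IsDivisorClosedIn M (AddSubmonoid.multiples a)) : AddIsAtomIn M a := by
  refine ⟨ha, (addIsUnitIn_iff_eq_zero hred).not.mpr ha0, fun b c hb hc hbc => ?_⟩
  have habc : b + c ∈ AddSubmonoid.multiples a := hbc ▸ AddSubmonoid.mem_multiples a
  obtain ⟨i, rfl⟩ := (AddSubmonoid.mem_multiples_iff _ _).mp (h b hb c hc habc)
  obtain ⟨j, rfl⟩ := (AddSubmonoid.mem_multiples_iff _ _).mp
    (h c hc _ hb (add_comm (i • a) c ▸ habc))
  have hij : i + j = 1 := nsmul_left_injective_of_ne_zero ha0 (by simp [add_nsmul, ← hbc])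
  simp only [addIsUnitIn_iff_eq_zero hred]
  rcases Nat.add_eq_one_iff.mp hij with ⟨rfl, -⟩ | ⟨-, rfl⟩ <;> simp

theorem IsDivisorClosedIn.addIsStrongAtomIn (hred : ∀ x ∈ M, -x ∈ M → x = 0) (ha : a ∈ M)
    (ha0 : a ≠ 0) (h : IsDivisorClosedIn M (AddSubmonoid.multiples a)) :
    AddIsStrongAtomIn M a := by
  refine ⟨h.addIsAtomIn hred ha ha0, fun n _ s hs hsum => ?_⟩
  have hs_eq : ∀ b ∈ s, b = a := by
    intro b hb
    have hb_atom := hs b hb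
    obtain ⟨t, rfl⟩ := Multiset.exists_cons_of_mem hb
    rw [Multiset.sum_cons] at hsum
    have ht : t.sum ∈ M :=
      M.multiset_sum_mem t fun x hx => (hs x (Multiset.mem_cons_of_mem hx)).1
    obtain ⟨j, rfl⟩ := (AddSubmonoid.mem_multiples_iff _ _).mp
      (h b hb_atom.1 t.sum ht ⟨n, hsum.symm⟩)
    rw [eq_one_of_addIsAtomIn_nsmul hred ha ha0 hb_atom, one_nsmul]
  have hcard : Multiset.card s = n := nsmul_left_injective_of_ne_zero ha0 <| by
    simp only [← hsum, ← Multiset.sum_replicate, ← Multiset.eq_replicate_card.mpr hs_eq]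
  rw [← hcard]
  exact Multiset.eq_replicate_card.mpr hs_eq

theorem addIsStrongAtomIn_iff_isDivisorClosedIn_multiples (hred : ∀ x ∈ M, -x ∈ M → x = 0)
    (hatomic : AddIsAtomicIn M) (ha : a ∈ M) (ha0 : a ≠ 0) :
    AddIsStrongAtomIn M a ↔ IsDivisorClosedIn M (AddSubmonoid.multiples a) :=
  ⟨fun h => h.isDivisorClosedIn_multiples hred hatomic, fun h => h.addIsStrongAtomIn hred ha ha0⟩

end Factorization

section Ray

variable {V : Type*} [AddCommGroup V] [Module ℚ V]

def rayQ (v : V) : Set V :=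
  {x | ∃ q : ℚ, 0 ≤ q ∧ x = q • v}

theorem smul_mem_rayQ_iff {v x : V} {c : ℚ} (hc : 0 < c) : c • x ∈ rayQ v ↔ x ∈ rayQ v := by
  constructor
  · rintro ⟨q, hq, hcx⟩
    refine ⟨c⁻¹ * q, by positivity, ?_⟩
    rw [mul_smul, ← hcx, inv_smul_smul₀ hc.ne']
  · rintro ⟨q, hq, rfl⟩
    exact ⟨c * q, by positivity, (mul_smul c q v).symm⟩

theorem nsmul_mem_rayQ_iff {v x : V} {n : ℕ} (hn : 0 < n) : n • x ∈ rayQ v ↔ x ∈ rayQ v := by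
  rw [← Nat.cast_smul_eq_nsmul ℚ]
  exact smul_mem_rayQ_iff (by exact_mod_cast hn)

theorem den_nsmul_smul_eq {q : ℚ} (hq : 0 ≤ q) (v : V) : q.den • q • v = q.num.toNat • v := by
  rw [← Nat.cast_smul_eq_nsmul ℚ, ← Nat.cast_smul_eq_nsmul ℚ, smul_smul, Rat.den_mul_eq_num]
  exact_mod_cast congrArg (· • v) (Int.toNat_of_nonneg (Rat.num_nonneg.mpr hq)).symm

end Ray

section Cone

variable {d : ℕ} {M : AddSubmonoid (Fin d → ℤ)} {a : Fin d → ℤ}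

theorem coeZQ_add (v w : Fin d → ℤ) : coeZQ (v + w) = coeZQ v + coeZQ w := by
  ext; simp [coeZQ]

theorem coeZQ_nsmul (n : ℕ) (v : Fin d → ℤ) : coeZQ (n • v) = n • coeZQ v := by
  ext; simp [coeZQ]

theorem coeZQ_injective : Function.Injective (coeZQ (d := d)) := fun v w h =>
  funext fun i => by simpa [coeZQ] using congrFun h i

theorem IsConvexConeQ.smul_mem {C : Set (Fin d → ℚ)} (hC : IsConvexConeQ C)
    {x : Fin d → ℚ} (hx : x ∈ C) {c : ℚ} (hc : 0 ≤ c) : c • x ∈ C := by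
  simpa using hC.2 x hx x hx c 0 hc le_rfl

theorem isConvexConeQ_rayQ (v : Fin d → ℚ) : IsConvexConeQ (rayQ v) := by
  refine ⟨⟨0, 0, le_rfl, by simp⟩, ?_⟩
  rintro _ ⟨q, hq, rfl⟩ _ ⟨r, hr, rfl⟩ s t hs ht
  exact ⟨s * q + t * r, by positivity, by rw [add_smul, mul_smul, mul_smul]⟩

theorem isConvexConeQ_conicHullQ (S : Set (Fin d → ℚ)) : IsConvexConeQ (conicHullQ S) := by
  refine ⟨⟨0, 0, Fin.elim0, Fin.elim0, fun i => i.elim0, by simp⟩, ?_⟩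
  rintro _ ⟨n, e, v, hev, rfl⟩ _ ⟨m, f, w, hfw, rfl⟩ s t hs ht
  refine ⟨n + m, Fin.append (s • e) (t • f), Fin.append v w,
    Fin.addCases (fun i => by simpa using ⟨mul_nonneg hs (hev i).1, (hev i).2⟩)
      (fun i => by simpa using ⟨mul_nonneg ht (hfw i).1, (hfw i).2⟩), ?_⟩
  simp [Fin.sum_univ_add, Finset.smul_sum, smul_smul]

theorem coeZQ_mem_conicHullQ {m : Fin d → ℤ} (hm : m ∈ M) :
    coeZQ m ∈ conicHullQ (coeZQ '' (M : Set (Fin d → ℤ))) :=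
  ⟨1, fun _ => 1, fun _ => coeZQ m, fun _ => ⟨zero_le_one, m, hm, rfl⟩, by simp⟩

theorem exists_nsmul_eq_coeZQ_of_mem_conicHullQ {z : Fin d → ℚ}
    (hz : z ∈ conicHullQ (coeZQ '' (M : Set (Fin d → ℤ)))) :
    ∃ N : ℕ, 0 < N ∧ ∃ m ∈ M, N • z = coeZQ m := by
  obtain ⟨n, c, v, hcv, rfl⟩ := hz
  refine Finset.sum_induction _ (fun y => ∃ N : ℕ, 0 < N ∧ ∃ m ∈ M, N • y = coeZQ m)
    ?_ ⟨1, one_pos, 0, M.zero_mem, by ext; simp [coeZQ]⟩ fun i _ => ?_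
  · rintro y₁ y₂ ⟨N, hN, m, hm, hy₁⟩ ⟨K, hK, k, hk, hy₂⟩
    refine ⟨N * K, Nat.mul_pos hN hK, K • m + N • k,
      M.add_mem (M.nsmul_mem hm K) (M.nsmul_mem hk N), ?_⟩
    rw [coeZQ_add, coeZQ_nsmul, coeZQ_nsmul, ← hy₁, ← hy₂, smul_add, mul_smul, mul_smul,
      smul_comm N K y₁]
  · obtain ⟨m, hm, hmv⟩ := (hcv i).2
    exact ⟨(c i).den, (c i).pos, (c i).num.toNat • m, M.nsmul_mem hm _, by
      rw [coeZQ_nsmul, hmv, den_nsmul_smul_eq (hcv i).1]⟩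

theorem IsFaceOfQ.left_mem_of_add_mem {C F : Set (Fin d → ℚ)} (hF : IsFaceOfQ C F)
    (hC : IsConvexConeQ C) {x y : Fin d → ℚ} (hx : x ∈ C) (hy : y ∈ C) (hxy : x + y ∈ F) :
    x ∈ F := by
  -- `x + y` is the midpoint of `2 • x` and `2 • y`.
  have h2x : (2 : ℚ) • x ∈ F := (hF.2.2 _ (hC.smul_mem hx zero_le_two) _
    (hC.smul_mem hy zero_le_two) ⟨1 / 2, by norm_num, by norm_num, by
      rwa [smul_smul, smul_smul, show (1 - 1 / 2 : ℚ) * 2 = 1 by norm_num,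
        show (1 / 2 : ℚ) * 2 = 1 by norm_num, one_smul, one_smul]⟩).1
  simpa [smul_smul] using hF.2.1.smul_mem h2x (by norm_num : (0 : ℚ) ≤ 1 / 2)

theorem IsDivisorClosedIn.mem_multiples_of_coeZQ_mem_rayQ
    (h : IsDivisorClosedIn M (AddSubmonoid.multiples a)) {m : Fin d → ℤ} (hm : m ∈ M)
    (hma : coeZQ m ∈ rayQ (coeZQ a)) : m ∈ AddSubmonoid.multiples a := by
  obtain ⟨q, hq, hmq⟩ := hma
  have hden : q.den • m = q.num.toNat • a := coeZQ_injective <| by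
    rw [coeZQ_nsmul, coeZQ_nsmul, hmq, den_nsmul_smul_eq hq]
  obtain ⟨k, hk⟩ := Nat.exists_eq_succ_of_ne_zero q.den_nz
  refine h m hm (k • m) (M.nsmul_mem hm k) ((AddSubmonoid.mem_multiples_iff _ _).mpr
    ⟨q.num.toNat, ?_⟩)
  rw [← hden, hk, succ_nsmul']

theorem IsDivisorClosedIn.mem_rayQ_of_add_mem_rayQ
    (h : IsDivisorClosedIn M (AddSubmonoid.multiples a)) {z w : Fin d → ℚ}
    (hz : z ∈ conicHullQ (coeZQ '' (M : Set (Fin d → ℤ))))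
    (hw : w ∈ conicHullQ (coeZQ '' (M : Set (Fin d → ℤ)))) (hzw : z + w ∈ rayQ (coeZQ a)) :
    z ∈ rayQ (coeZQ a) := by
  obtain ⟨N, hN, m, hm, hzm⟩ := exists_nsmul_eq_coeZQ_of_mem_conicHullQ hz
  obtain ⟨K, hK, k, hk, hwk⟩ := exists_nsmul_eq_coeZQ_of_mem_conicHullQ hw
  have hsum : coeZQ (K • m + N • k) ∈ rayQ (coeZQ a) := by
    rw [coeZQ_add, coeZQ_nsmul, coeZQ_nsmul, ← hzm, ← hwk, smul_comm K N z, ← smul_add,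
      ← smul_add]
    exact (nsmul_mem_rayQ_iff hN).mpr ((nsmul_mem_rayQ_iff hK).mpr hzw)
  have hKm := M.nsmul_mem hm K
  have hNk := M.nsmul_mem hk N
  obtain ⟨j, hj⟩ := (AddSubmonoid.mem_multiples_iff _ _).mp <|
    h _ hKm _ hNk (h.mem_multiples_of_coeZQ_mem_rayQ (M.add_mem hKm hNk) hsum)
  have hKNz : K • N • z ∈ rayQ (coeZQ a) :=
    ⟨j, j.cast_nonneg, by rw [hzm, ← coeZQ_nsmul, ← hj, coeZQ_nsmul, Nat.cast_smul_eq_nsmul]⟩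
  exact (nsmul_mem_rayQ_iff hN).mp ((nsmul_mem_rayQ_iff hK).mp hKNz)

theorem IsDivisorClosedIn.isFaceOfQ (h : IsDivisorClosedIn M (AddSubmonoid.multiples a))
    (ha : a ∈ M) :
    IsFaceOfQ (conicHullQ (coeZQ '' (M : Set (Fin d → ℤ)))) (rayQ (coeZQ a)) := by
  have hC := isConvexConeQ_conicHullQ (coeZQ '' (M : Set (Fin d → ℤ)))
  refine ⟨?_, isConvexConeQ_rayQ _, ?_⟩
  · rintro _ ⟨q, hq, rfl⟩
    exact hC.smul_mem (coeZQ_mem_conicHullQ ha) hq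
  · rintro x hx y hy ⟨t, ht0, ht1, htxy⟩
    have htx := hC.smul_mem hx ht0.le
    have hty := hC.smul_mem hy (sub_pos.mpr ht1).le
    exact ⟨(smul_mem_rayQ_iff ht0).mp (h.mem_rayQ_of_add_mem_rayQ htx hty htxy),
      (smul_mem_rayQ_iff (sub_pos.mpr ht1)).mp
        (h.mem_rayQ_of_add_mem_rayQ hty htx (add_comm (t • x) _ ▸ htxy))⟩

theorem IsDivisorClosedIn.setOf_mem_rayQ_eq
    (h : IsDivisorClosedIn M (AddSubmonoid.multiples a)) (ha : a ∈ M) :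
    {x | x ∈ M ∧ coeZQ x ∈ rayQ (coeZQ a)} = {x | ∃ n : ℕ, x = n • a} := by
  ext x
  constructor
  · rintro ⟨hx, hxa⟩
    obtain ⟨n, hn⟩ := (AddSubmonoid.mem_multiples_iff _ _).mp
      (h.mem_multiples_of_coeZQ_mem_rayQ hx hxa)
    exact ⟨n, hn.symm⟩
  · rintro ⟨n, rfl⟩
    exact ⟨M.nsmul_mem ha n, n, n.cast_nonneg, by rw [coeZQ_nsmul, Nat.cast_smul_eq_nsmul]⟩

theorem isDivisorClosedIn_multiples_of_isFaceOfQ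
    (hF : IsFaceOfQ (conicHullQ (coeZQ '' (M : Set (Fin d → ℤ)))) (rayQ (coeZQ a)))
    (hMF : {x | x ∈ M ∧ coeZQ x ∈ rayQ (coeZQ a)} = {x | ∃ n : ℕ, x = n • a}) :
    IsDivisorClosedIn M (AddSubmonoid.multiples a) := by
  intro b hb c hc hbc
  obtain ⟨n, hn⟩ := (AddSubmonoid.mem_multiples_iff _ _).mp hbc
  have hbF := hF.left_mem_of_add_mem (isConvexConeQ_conicHullQ _) (coeZQ_mem_conicHullQ hb)
    (coeZQ_mem_conicHullQ hc)
    ⟨n, n.cast_nonneg, by rw [← coeZQ_add, ← hn, coeZQ_nsmul, Nat.cast_smul_eq_nsmul]⟩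
  obtain ⟨i, hi⟩ := hMF.subset ⟨hb, hbF⟩
  exact (AddSubmonoid.mem_multiples_iff _ _).mpr ⟨i, hi.symm⟩

theorem isDivisorClosedIn_multiples_iff (ha : a ∈ M) :
    IsDivisorClosedIn M (AddSubmonoid.multiples a) ↔
      IsFaceOfQ (conicHullQ (coeZQ '' (M : Set (Fin d → ℤ)))) (rayQ (coeZQ a)) ∧
        {x | x ∈ M ∧ coeZQ x ∈ rayQ (coeZQ a)} = {x | ∃ n : ℕ, x = n • a} :=
  ⟨fun h => ⟨h.isFaceOfQ ha, h.setOf_mem_rayQ_eq ha⟩,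
    fun h => isDivisorClosedIn_multiples_of_isFaceOfQ h.1 h.2⟩

end Cone

/-- Geometric characterization of strong atoms: for a reduced atomic submonoid `M ⊆ ℤ^d`
with conic hull `C ⊆ ℚ^d`, a nonzero `a ∈ M` is a strong atom iff `ℚ≥0·a` is a
(one-dimensional, as `a ≠ 0`) face of `C` and `M ∩ ℚ≥0·a = ℕ₀·a`. -/
theorem strong_atom_iff_one_dimensional_face {d : ℕ}
    (M : AddSubmonoid (Fin d → ℤ))
    (hred : ∀ x ∈ M, -x ∈ M → x = 0)
    (hatomic : AddIsAtomicIn M)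
    (a : Fin d → ℤ) (haM : a ∈ M) (ha0 : a ≠ 0) :
    AddIsStrongAtomIn M a ↔
      (IsFaceOfQ (conicHullQ (coeZQ '' (M : Set (Fin d → ℤ))))
          {x : Fin d → ℚ | ∃ q : ℚ, 0 ≤ q ∧ x = q • coeZQ a} ∧
        {x : Fin d → ℤ | x ∈ M ∧ ∃ q : ℚ, 0 ≤ q ∧ coeZQ x = q • coeZQ a} =
          {x : Fin d → ℤ | ∃ n : ℕ, x = n • a}) :=
  (addIsStrongAtomIn_iff_isDivisorClosedIn_multiples hred hatomic haM ha0).trans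
    (isDivisorClosedIn_multiples_iff haM)
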